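/- Under the assumptions of Theorem 1 and with the optimal discriminator D* for each z, the generator cost satisfies C(G) = max_D V(G,D) = 2 ∫ p(z) JSD(p(·|z) ‖ G(·|z)) dz − log 4. -/

import Mathlib

/-!
For fixed `z` the discriminator is optimised pointwise: for `a, b ≥ 0` the concave function
`t ↦ a log t + b log (1 - t)` on `(0, 1)` is maximised at `t = a / (a + b)`, a consequence of
`log x ≤ x - 1`. At that optimum, `log (a / (a + b)) = log (a / ((a + b) / 2)) - log 2`, and since
both conditional densities have total mass one the per-`z` value equals `2 JSD - log 4`.
Integrating against the prior density, which also has mass one, gives the claim.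
-/

open MeasureTheory

/-- Jensen–Shannon divergence between two densities `p, g` w.r.t. a common measure `μ`:
`JSD(P‖Q) = (1/2) KL(P ‖ M) + (1/2) KL(Q ‖ M)` with `M = (P + Q)/2`. -/
noncomputable def jsdDensity {Y : Type*} [MeasurableSpace Y] (μ : Measure Y)
    (p g : Y → ℝ) : ℝ :=
  (1 / 2) * (∫ y, p y * Real.log (p y / ((p y + g y) / 2)) ∂μ) +
    (1 / 2) * ∫ y, g y * Real.log (g y / ((p y + g y) / 2)) ∂μ

/-- Per-`z` GAN value `V_z(D) = ∫ p log D + ∫ g log (1 - D)`. -/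
noncomputable def ganValue {Y : Type*} [MeasurableSpace Y] (μ : Measure Y)
    (p g D : Y → ℝ) : ℝ :=
  (∫ y, p y * Real.log (D y) ∂μ) + ∫ y, g y * Real.log (1 - D y) ∂μ

open Real

namespace Real

lemma mul_log_le_mul_log_div_add_mul_sub {a c x : ℝ} (ha : 0 ≤ a) (hc : 0 < c) (hx : 0 < x) :
    a * log x ≤ a * log (a / c) + c * x - a := by
  rcases ha.eq_or_lt with rfl | ha
  · simp only [zero_mul, sub_zero, zero_div]
    positivity
  have key : log (x / (a / c)) ≤ x / (a / c) - 1 := log_le_sub_one_of_pos (by positivity)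
  rw [log_div hx.ne' (by positivity)] at key
  have hmul := mul_le_mul_of_nonneg_left key ha.le
  have hcancel : a * (x / (a / c) - 1) = c * x - a := by field_simp
  linarith

lemma mul_log_one_sub_div_add {a b : ℝ} (ha : 0 ≤ a) (hb : 0 ≤ b) :
    b * log (1 - a / (a + b)) = b * log (b / (a + b)) := by
  rcases hb.eq_or_lt with rfl | hb
  · simp
  rw [one_sub_div (add_pos_of_nonneg_of_pos ha hb).ne', add_sub_cancel_left]

lemma mul_log_div_half {a c : ℝ} (ha : 0 ≤ a) (hac : a ≤ c) :
    a * log (a / (c / 2)) = a * log (a / c) + a * log 2 := by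
  rcases ha.eq_or_lt with rfl | ha
  · simp
  rw [div_div_eq_mul_div, mul_div_right_comm,
    log_mul (div_pos ha (ha.trans_le hac)).ne' two_ne_zero]
  ring

lemma mul_log_add_mul_log_one_sub_le {a b t : ℝ} (ha : 0 ≤ a) (hb : 0 ≤ b)
    (ht : t ∈ Set.Ioo 0 1) :
    a * log t + b * log (1 - t) ≤ a * log (a / (a + b)) + b * log (1 - a / (a + b)) := by
  rw [mul_log_one_sub_div_add ha hb]
  rcases (add_nonneg ha hb).eq_or_lt with hab | hab
  · obtain ⟨rfl, rfl⟩ : a = 0 ∧ b = 0 := ⟨by linarith, by linarith⟩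
    simp
  have h₁ := mul_log_le_mul_log_div_add_mul_sub ha hab ht.1
  have h₂ := mul_log_le_mul_log_div_add_mul_sub hb hab (sub_pos.2 ht.2)
  linarith

end Real

section GAN

variable {Y : Type*} [MeasurableSpace Y] {μ : Measure Y} {p g : Y → ℝ}

lemma ganValue_le_ganValue_div_add {D : Y → ℝ} (hp : ∀ y, 0 ≤ p y) (hg : ∀ y, 0 ≤ g y)
    (hD : ∀ y, D y ∈ Set.Ioo (0 : ℝ) 1)
    (hpD : Integrable (fun y => p y * log (D y)) μ)
    (hgD : Integrable (fun y => g y * log (1 - D y)) μ)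
    (hp_opt : Integrable (fun y => p y * log (p y / (p y + g y))) μ)
    (hg_opt : Integrable (fun y => g y * log (1 - p y / (p y + g y))) μ) :
    ganValue μ p g D ≤ ganValue μ p g (fun y => p y / (p y + g y)) := by
  rw [ganValue, ganValue, ← integral_add hpD hgD, ← integral_add hp_opt hg_opt]
  exact integral_mono (hpD.add hgD) (hp_opt.add hg_opt) fun y =>
    mul_log_add_mul_log_one_sub_le (hp y) (hg y) (hD y)

lemma ganValue_div_add_eq_two_mul_jsdDensity_sub_log_four (hp : ∀ y, 0 ≤ p y)
    (hg : ∀ y, 0 ≤ g y) (hp1 : ∫ y, p y ∂μ = 1) (hg1 : ∫ y, g y ∂μ = 1)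
    (hp_opt : Integrable (fun y => p y * log (p y / (p y + g y))) μ)
    (hg_opt : Integrable (fun y => g y * log (1 - p y / (p y + g y))) μ) :
    ganValue μ p g (fun y => p y / (p y + g y)) = 2 * jsdDensity μ p g - log 4 := by
  have hp_half : ∫ y, p y * log (p y / ((p y + g y) / 2)) ∂μ =
      (∫ y, p y * log (p y / (p y + g y)) ∂μ) + log 2 := by
    simp_rw [mul_log_div_half (hp _) (le_add_of_nonneg_right (hg _))]
    rw [integral_add hp_opt ((integrable_of_integral_eq_one hp1).mul_const _),
      integral_mul_const, hp1, one_mul]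
  have hg_half : ∫ y, g y * log (g y / ((p y + g y) / 2)) ∂μ =
      (∫ y, g y * log (1 - p y / (p y + g y)) ∂μ) + log 2 := by
    simp_rw [mul_log_one_sub_div_add (hp _) (hg _)] at hg_opt ⊢
    simp_rw [mul_log_div_half (hg _) (le_add_of_nonneg_left (hp _))]
    rw [integral_add hg_opt ((integrable_of_integral_eq_one hg1).mul_const _),
      integral_mul_const, hg1, one_mul]
  have hlog4 : log 4 = 2 * log 2 := by
    rw [show (4 : ℝ) = 2 ^ 2 by norm_num, log_pow, Nat.cast_ofNat]
  rw [ganValue, jsdDensity, hp_half, hg_half, hlog4]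
  ring

end GAN

lemma integral_mul_const_mul_sub_of_integral_eq_one {Z : Type*} [MeasurableSpace Z]
    {ν : Measure Z} {w f : Z → ℝ} (hw : ∫ z, w z ∂ν = 1)
    (hwf : Integrable (fun z => w z * f z) ν)
    (a b : ℝ) : ∫ z, w z * (a * f z - b) ∂ν = a * (∫ z, w z * f z ∂ν) - b := by
  have hsplit : (fun z => w z * (a * f z - b)) = fun z => a * (w z * f z) - b * w z := by
    ext z; ring
  rw [hsplit, integral_sub (hwf.const_mul a) ((integrable_of_integral_eq_one hw).const_mul b),
    integral_const_mul, integral_const_mul, hw, mul_one]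

theorem generator_cost_eq_expected_jsd_general
    {Y Z : Type*} [MeasurableSpace Y] [MeasurableSpace Z]
    (μ : Measure Y) (ν : Measure Z)
    (pZ : Z → ℝ) (pYZ : Z → Y → ℝ) (G : Z → Y → ℝ)
    (hpZ0 : ∀ z, 0 ≤ pZ z) (hpYZ0 : ∀ z y, 0 ≤ pYZ z y) (hG0 : ∀ z y, 0 ≤ G z y)
    (hpZ1 : ∫ z, pZ z ∂ν = 1)
    (hpYZ1 : ∀ z, ∫ y, pYZ z y ∂μ = 1) (hG1 : ∀ z, ∫ y, G z y ∂μ = 1)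
    (hIntstar1 : ∀ z, Integrable
      (fun y => pYZ z y * Real.log (pYZ z y / (pYZ z y + G z y))) μ)
    (hIntstar2 : ∀ z, Integrable
      (fun y => G z y * Real.log (1 - pYZ z y / (pYZ z y + G z y))) μ)
    (hIntVstar : Integrable (fun z => pZ z *
      ganValue μ (pYZ z) (G z) (fun y => pYZ z y / (pYZ z y + G z y))) ν)
    (hIntJSD : Integrable (fun z => pZ z * jsdDensity μ (pYZ z) (G z)) ν) :
    (∀ D : Y → Z → ℝ, Measurable (Function.uncurry D) →
      (∀ y z, D y z ∈ Set.Ioo (0 : ℝ) 1) →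
      (∀ z, Integrable (fun y => pYZ z y * Real.log (D y z)) μ) →
      (∀ z, Integrable (fun y => G z y * Real.log (1 - D y z)) μ) →
      Integrable (fun z => pZ z * ganValue μ (pYZ z) (G z) (fun y => D y z)) ν →
      (∫ z, pZ z * ganValue μ (pYZ z) (G z) (fun y => D y z) ∂ν) ≤
        2 * (∫ z, pZ z * jsdDensity μ (pYZ z) (G z) ∂ν) - Real.log 4) ∧
    (∫ z, pZ z * ganValue μ (pYZ z) (G z)
        (fun y => pYZ z y / (pYZ z y + G z y)) ∂ν) =
      2 * (∫ z, pZ z * jsdDensity μ (pYZ z) (G z) ∂ν) - Real.log 4 := by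
  have hopt : (∫ z, pZ z * ganValue μ (pYZ z) (G z)
      (fun y => pYZ z y / (pYZ z y + G z y)) ∂ν) =
      2 * (∫ z, pZ z * jsdDensity μ (pYZ z) (G z) ∂ν) - Real.log 4 := by
    simp_rw [ganValue_div_add_eq_two_mul_jsdDensity_sub_log_four (hpYZ0 _) (hG0 _) (hpYZ1 _)
      (hG1 _) (hIntstar1 _) (hIntstar2 _)]
    exact integral_mul_const_mul_sub_of_integral_eq_one hpZ1 hIntJSD 2 (Real.log 4)
  refine ⟨fun D _ hD hpD hgD hIntV => le_of_le_of_eq ?_ hopt, hopt⟩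
  exact integral_mono hIntV hIntVstar fun z => mul_le_mul_of_nonneg_left
    (ganValue_le_ganValue_div_add (hpYZ0 z) (hG0 z) (fun y => hD y z) (hpD z) (hgD z)
      (hIntstar1 z) (hIntstar2 z)) (hpZ0 z)

/-- Under the assumptions of Theorem 1 and with the optimal discriminator
`D*(y|z) = p(y|z) / (p(y|z) + G(y|z))` for each `z`, the generator cost satisfies
`C(G) = max_D V(G,D) = 2 ∫ p(z) JSD(p(·|z) ‖ G(·|z)) dz - log 4`. -/
theorem generator_cost_eq_expected_jsd
    {Y Z : Type*} [MeasurableSpace Y] [MeasurableSpace Z]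
    (μ : Measure Y) (ν : Measure Z) [SigmaFinite μ] [SigmaFinite ν]
    (pZ : Z → ℝ) (pYZ : Z → Y → ℝ) (G : Z → Y → ℝ)
    (hpZmeas : Measurable pZ) (hpYZmeas : Measurable (Function.uncurry pYZ))
    (hGmeas : Measurable (Function.uncurry G))
    (hpZ0 : ∀ z, 0 ≤ pZ z) (hpYZ0 : ∀ z y, 0 ≤ pYZ z y) (hG0 : ∀ z y, 0 ≤ G z y)
    (hpZ1 : ∫ z, pZ z ∂ν = 1)
    (hpYZ1 : ∀ z, ∫ y, pYZ z y ∂μ = 1) (hG1 : ∀ z, ∫ y, G z y ∂μ = 1)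
    (hIntstar1 : ∀ z, Integrable
      (fun y => pYZ z y * Real.log (pYZ z y / (pYZ z y + G z y))) μ)
    (hIntstar2 : ∀ z, Integrable
      (fun y => G z y * Real.log (1 - pYZ z y / (pYZ z y + G z y))) μ)
    (hIntVstar : Integrable (fun z => pZ z *
      ganValue μ (pYZ z) (G z) (fun y => pYZ z y / (pYZ z y + G z y))) ν)
    (hIntJSD : Integrable (fun z => pZ z * jsdDensity μ (pYZ z) (G z)) ν) :
    (∀ D : Y → Z → ℝ, Measurable (Function.uncurry D) →
      (∀ y z, D y z ∈ Set.Ioo (0 : ℝ) 1) →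
      (∀ z, Integrable (fun y => pYZ z y * Real.log (D y z)) μ) →
      (∀ z, Integrable (fun y => G z y * Real.log (1 - D y z)) μ) →
      Integrable (fun z => pZ z * ganValue μ (pYZ z) (G z) (fun y => D y z)) ν →
      (∫ z, pZ z * ganValue μ (pYZ z) (G z) (fun y => D y z) ∂ν) ≤
        2 * (∫ z, pZ z * jsdDensity μ (pYZ z) (G z) ∂ν) - Real.log 4) ∧
    (∫ z, pZ z * ganValue μ (pYZ z) (G z)
        (fun y => pYZ z y / (pYZ z y + G z y)) ∂ν) =
      2 * (∫ z, pZ z * jsdDensity μ (pYZ z) (G z) ∂ν) - Real.log 4 :=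
  generator_cost_eq_expected_jsd_general μ ν pZ pYZ G hpZ0 hpYZ0 hG0 hpZ1 hpYZ1 hG1 hIntstar1
    hIntstar2 hIntVstar hIntJSD
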